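/- arXiv:0808.1629 — 2 statements merged into one kernel-verified Lean document; each statement's English description precedes it below -/
import Mathlib

section
/- With the combinatorial and matrix setup below, each of the subspaces n₊, n₊,₁, n₋, n₋,₁ of M_r(k) is both a left and a right module over n₀,₀ (i.e. n₀,₀·n ⊆ n and n·n₀,₀ ⊆ n for n any of these four subspaces). Moreover n₀,₀^d·n₊ = n₊·n₀,₀^c = n₀,₀^c·n₋ = n₋·n₀,₀^d = 0. -/
namespace PaperPurity

variable {r : ℕ}

/-- `J₊ = {(i,j) : j ≤ c < i}` (translated to 0-based indexing on `Fin r`). -/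
def Jp (c : ℕ) : Set (Fin r × Fin r) := {q | q.2.val < c ∧ c ≤ q.1.val}

/-- `J₀ = {(i,j) : i,j ≤ c or i,j > c}` (0-based). -/
def Jz (c : ℕ) : Set (Fin r × Fin r) :=
  {q | (q.1.val < c ∧ q.2.val < c) ∨ (c ≤ q.1.val ∧ c ≤ q.2.val)}

/-- `J₋ = {(i,j) : i ≤ c < j}` (0-based). -/
def Jm (c : ℕ) : Set (Fin r × Fin r) := {q | q.1.val < c ∧ c ≤ q.2.val}

/-- Apply `π^s` to both entries of a pair. -/
def iter (π : Equiv.Perm (Fin r)) (s : ℕ) (q : Fin r × Fin r) : Fin r × Fin r :=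
  ((π ^ s) q.1, (π ^ s) q.2)

/-- The π-order `ν(i,j)`: the smallest positive `ν` with `(π^ν i, π^ν j) ∈ J₊ ∪ J₋`.
On `J₀,₀` this `sInf` also computes the extended π-order `ν(i,j) - s`. -/
noncomputable def nu (π : Equiv.Perm (Fin r)) (c : ℕ) (q : Fin r × Fin r) : ℕ :=
  sInf {ν : ℕ | 0 < ν ∧ iter π ν q ∈ Jp c ∪ Jm c}

/-- `J₋,₁`. -/
def Jm1 (π : Equiv.Perm (Fin r)) (c : ℕ) : Set (Fin r × Fin r) :=
  {q | q ∈ Jm c ∧ iter π (nu π c q) q ∈ Jp c}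

/-- `J₊,₁`. -/
def Jp1 (π : Equiv.Perm (Fin r)) (c : ℕ) : Set (Fin r × Fin r) :=
  {q' | ∃ q ∈ Jm1 π c, q' = iter π (nu π c q) q}

/-- `J₊,₂ = J₊ \ J₊,₁`. -/
def Jp2 (π : Equiv.Perm (Fin r)) (c : ℕ) : Set (Fin r × Fin r) := Jp c \ Jp1 π c

/-- `J₀,₀`. -/
def Jz0 (π : Equiv.Perm (Fin r)) (c : ℕ) : Set (Fin r × Fin r) :=
  {q' | ∃ q ∈ Jm1 π c, ∃ s : ℕ, 1 ≤ s ∧ s ≤ nu π c q - 1 ∧ q' = iter π s q}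

/-- The π-level `η`. -/
noncomputable def eta (π : Equiv.Perm (Fin r)) (c : ℕ) (q' : Fin r × Fin r) : ℕ :=
  sInf {s : ℕ | ∃ q ∈ Jm1 π c, s ≤ nu π c q ∧ q' = iter π s q}

/-- Membership in `Γ` for the tuple `(γ 1, …, γ s)`. -/
def inGamma (π : Equiv.Perm (Fin r)) (c s : ℕ) (γ : ℕ → Fin r) : Prop :=
  2 ≤ s ∧ (∀ ℓ : ℕ, 1 ≤ ℓ → ℓ ≤ s - 2 → (γ ℓ, γ (ℓ + 1)) ∈ Jz0 π c) ∧
    (γ (s - 1), γ s) ∈ Jp2 π c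

/-- Membership in `Δ` for the tuple `(γ 1, …, γ s)`. -/
def inDelta (π : Equiv.Perm (Fin r)) (c s : ℕ) (γ : ℕ → Fin r) : Prop :=
  3 ≤ s ∧ inGamma π c (s - 1) γ ∧ (γ (s - 1), γ s) ∈ Jz0 π c

/-- `n_t(γ)`. -/
noncomputable def nCount (π : Equiv.Perm (Fin r)) (c s : ℕ) (γ : ℕ → Fin r) (t : ℕ) : ℕ :=
  Set.ncard {ℓ : ℕ | 1 ≤ ℓ ∧ ℓ ≤ s - 1 ∧ (γ ℓ, γ (ℓ + 1)) ∈ Jz0 π c ∧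
    nu π c (γ ℓ, γ (ℓ + 1)) = t}

/-- `κ(γ) = Σ_{t ≥ 1} n_t(γ) p^{-t} ∈ ℚ`. -/
noncomputable def kappa (p : ℕ) (π : Equiv.Perm (Fin r)) (c s : ℕ) (γ : ℕ → Fin r) : ℚ :=
  ∑ᶠ t : ℕ, if 1 ≤ t then (nCount π c s γ t : ℚ) / (p : ℚ) ^ t else 0

/-- Membership in `Γ₁`. -/
def inGamma1 (π : Equiv.Perm (Fin r)) (c s : ℕ) (γ : ℕ → Fin r) : Prop :=
  inGamma π c s γ ∧ (γ 1, γ s) ∈ Jp1 π c ∧ (γ 2, γ s) ∉ Jp1 π c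

/-- Membership in `Δ₁`. -/
def inDelta1 (π : Equiv.Perm (Fin r)) (c s : ℕ) (γ : ℕ → Fin r) : Prop :=
  inDelta π c s γ ∧ (γ 1, γ s) ∈ Jp1 π c ∧ (γ 2, γ s) ∉ Jp1 π c

/-- `κ(π) = max {κ(γ) : γ ∈ Γ₁ ∪ Δ₁}` (and `0` if `Γ₁ ∪ Δ₁ = ∅`); realized as a
supremum in `ℝ` of the (finite) set of values together with `0`. -/
noncomputable def kappaPerm (p : ℕ) (π : Equiv.Perm (Fin r)) (c : ℕ) : ℝ :=
  sSup (insert (0 : ℝ) {x : ℝ | ∃ (s : ℕ) (γ : ℕ → Fin r),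
    (inGamma1 π c s γ ∨ inDelta1 π c s γ) ∧ x = ((kappa p π c s γ : ℚ) : ℝ)})

/-- The `k`-span of the matrix units `E_{i,j}`, `(i,j) ∈ S`. -/
def spanUnits (k : Type*) [Field k] {r : ℕ} (S : Set (Fin r × Fin r)) :
    Submodule k (Matrix (Fin r) (Fin r) k) :=
  Submodule.span k ((fun q : Fin r × Fin r => Matrix.single q.1 q.2 (1 : k)) '' S)


section Aux

variable {r : ℕ}

/-! ### iteration lemmas -/

lemma iter_zero (π : Equiv.Perm (Fin r)) (q : Fin r × Fin r) : iter π 0 q = q := by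
  simp [iter]

lemma iter_add (π : Equiv.Perm (Fin r)) (a b : ℕ) (q : Fin r × Fin r) :
    iter π a (iter π b q) = iter π (a + b) q := by
  simp [iter, pow_add, Equiv.Perm.mul_apply]

lemma iter_inv_iter_self (π : Equiv.Perm (Fin r)) (a : ℕ) (q : Fin r × Fin r) :
    iter π⁻¹ a (iter π a q) = q := by
  simp [iter, inv_pow]

lemma iter_inv_iter (π : Equiv.Perm (Fin r)) {a b : ℕ} (h : a ≤ b) (q : Fin r × Fin r) :
    iter π⁻¹ a (iter π b q) = iter π (b - a) q := by
  obtain ⟨e, rfl⟩ := Nat.exists_eq_add_of_le h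
  rw [← iter_add π a e q, iter_inv_iter_self, Nat.add_sub_cancel_left]

lemma iter_iter_inv_self (π : Equiv.Perm (Fin r)) (a : ℕ) (q : Fin r × Fin r) :
    iter π a (iter π⁻¹ a q) = q := by
  have := iter_inv_iter_self π⁻¹ a q
  rwa [inv_inv] at this

lemma iter_iter_inv (π : Equiv.Perm (Fin r)) {a b : ℕ} (h : a ≤ b) (q : Fin r × Fin r) :
    iter π a (iter π⁻¹ b q) = iter π⁻¹ (b - a) q := by
  have := iter_inv_iter π⁻¹ h q
  rwa [inv_inv] at this

/-! ### trichotomy -/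

lemma mem_Jz_iff_not (c : ℕ) (q : Fin r × Fin r) :
    q ∈ Jz (r := r) c ↔ q ∉ Jp (r := r) c ∪ Jm c := by
  simp only [Jp, Jm, Jz, Set.mem_union, Set.mem_setOf_eq]
  omega

/-! ### the spec of `nu` -/

lemma nu_spec (π : Equiv.Perm (Fin r)) (c : ℕ) {q : Fin r × Fin r}
    (hq : q ∈ Jp (r := r) c ∪ Jm c) :
    0 < nu π c q ∧ iter π (nu π c q) q ∈ Jp (r := r) c ∪ Jm c ∧
      ∀ s, 0 < s → s < nu π c q → iter π s q ∈ Jz (r := r) c := by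
  have hne : {ν : ℕ | 0 < ν ∧ iter π ν q ∈ Jp (r := r) c ∪ Jm c}.Nonempty := by
    refine ⟨orderOf π, orderOf_pos π, ?_⟩
    have h1 : iter π (orderOf π) q = q := by
      simp [iter, pow_orderOf_eq_one]
    rwa [h1]
  have hmem := Nat.sInf_mem hne
  refine ⟨hmem.1, hmem.2, fun s hs hlt => ?_⟩
  have hnot := Nat.notMem_of_lt_sInf hlt
  rw [mem_Jz_iff_not]
  intro hcon
  exact hnot ⟨hs, hcon⟩

lemma nu_eq (π : Equiv.Perm (Fin r)) (c : ℕ) {q : Fin r × Fin r} {t : ℕ}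
    (ht : 0 < t) (hmem : iter π t q ∈ Jp (r := r) c ∪ Jm c)
    (hint : ∀ s, 0 < s → s < t → iter π s q ∈ Jz (r := r) c) :
    nu π c q = t := by
  refine le_antisymm (Nat.sInf_le ⟨ht, hmem⟩) (le_csInf ⟨t, ht, hmem⟩ ?_)
  rintro x ⟨hx, hxm⟩
  by_contra h
  push_neg at h
  exact ((mem_Jz_iff_not c _).mp (hint x hx h)) hxm

/-! ### backward and forward properties -/

/-- first backward hit of `Jp ∪ Jm` is in `Jm`. -/
def Bprop (π : Equiv.Perm (Fin r)) (c : ℕ) (q : Fin r × Fin r) : Prop :=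
  ∃ m, 1 ≤ m ∧ iter π⁻¹ m q ∈ Jm (r := r) c ∧
    ∀ m', 1 ≤ m' → m' < m → iter π⁻¹ m' q ∈ Jz (r := r) c

/-- first forward hit of `Jp ∪ Jm` is in `Jp`. -/
def Fprop (π : Equiv.Perm (Fin r)) (c : ℕ) (q : Fin r × Fin r) : Prop :=
  ∃ t, 1 ≤ t ∧ iter π t q ∈ Jp (r := r) c ∧
    ∀ t', 1 ≤ t' → t' < t → iter π t' q ∈ Jz (r := r) c

lemma Jm1_iff (π : Equiv.Perm (Fin r)) (c : ℕ) (q : Fin r × Fin r) :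
    q ∈ Jm1 π c ↔ q ∈ Jm (r := r) c ∧ Fprop π c q := by
  constructor
  · rintro ⟨hm, hp⟩
    have hs := nu_spec π c (Or.inr hm)
    exact ⟨hm, nu π c q, hs.1, hp, fun t' h1 h2 => hs.2.2 t' h1 h2⟩
  · rintro ⟨hm, t, ht1, htp, hti⟩
    have hnu : nu π c q = t := nu_eq π c ht1 (Or.inl htp) hti
    exact ⟨hm, by rwa [hnu]⟩

lemma Jp1_iff (π : Equiv.Perm (Fin r)) (c : ℕ) (q' : Fin r × Fin r) :
    q' ∈ Jp1 π c ↔ q' ∈ Jp (r := r) c ∧ Bprop π c q' := by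
  constructor
  · rintro ⟨q, hq, rfl⟩
    obtain ⟨hm, hp⟩ := hq
    have hs := nu_spec π c (Or.inr hm)
    refine ⟨hp, nu π c q, hs.1, ?_, ?_⟩
    · rw [iter_inv_iter π le_rfl, Nat.sub_self, iter_zero]; exact hm
    · intro m' h1 h2
      rw [iter_inv_iter π (le_of_lt h2)]
      exact hs.2.2 _ (by omega) (by omega)
  · rintro ⟨hp, m, hm1, hmm, hmi⟩
    have hend : iter π m (iter π⁻¹ m q') = q' := iter_iter_inv_self π m q'
    have hint : ∀ s, 0 < s → s < m → iter π s (iter π⁻¹ m q') ∈ Jz (r := r) c := by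
      intro s h1 h2
      rw [iter_iter_inv π (le_of_lt h2)]
      exact hmi (m - s) (by omega) (by omega)
    have hnu : nu π c (iter π⁻¹ m q') = m :=
      nu_eq π c hm1 (by rw [hend]; exact Or.inl hp) hint
    refine ⟨iter π⁻¹ m q', ⟨hmm, ?_⟩, ?_⟩
    · rw [hnu, hend]; exact hp
    · rw [hnu, hend]

lemma Jz0_sub (π : Equiv.Perm (Fin r)) (c : ℕ) {q' : Fin r × Fin r} (h : q' ∈ Jz0 π c) :
    q' ∈ Jz (r := r) c ∧ Bprop π c q' ∧ Fprop π c q' := by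
  obtain ⟨q, hq, s, hs1, hs2, rfl⟩ := h
  obtain ⟨hm, hp⟩ := hq
  have hsp := nu_spec π c (Or.inr hm)
  have hsν : s < nu π c q := by omega
  refine ⟨hsp.2.2 s (by omega) hsν, ⟨s, hs1, ?_, ?_⟩, ⟨nu π c q - s, by omega, ?_, ?_⟩⟩
  · rw [iter_inv_iter π le_rfl, Nat.sub_self, iter_zero]; exact hm
  · intro m' h1 h2
    rw [iter_inv_iter π (le_of_lt h2)]
    exact hsp.2.2 _ (by omega) (by omega)
  · rw [iter_add]
    have he : nu π c q - s + s = nu π c q := by omega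
    rw [he]; exact hp
  · intro t' h1 h2
    rw [iter_add]
    exact hsp.2.2 _ (by omega) (by omega)

/-! ### composition -/

lemma Bprop_comp (π : Equiv.Perm (Fin r)) (c : ℕ) {x y : Fin r × Fin r}
    (h₁ : Bprop π c x) (h₂ : Bprop π c y) (hxy : x.2 = y.1) :
    Bprop π c (x.1, y.2) := by
  obtain ⟨a, b⟩ := x
  obtain ⟨b', l⟩ := y
  simp only at hxy
  subst hxy
  simp only [Bprop, Jm, Jz, iter, Set.mem_setOf_eq] at h₁ h₂ ⊢
  obtain ⟨m₁, hm₁, hJ₁, hI₁⟩ := h₁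
  obtain ⟨m₂, hm₂, hJ₂, hI₂⟩ := h₂
  refine ⟨min m₁ m₂, le_min hm₁ hm₂, ?_, ?_⟩
  · rcases le_total m₁ m₂ with h | h
    · rw [min_eq_left h]
      rcases eq_or_lt_of_le h with rfl | hlt
      · exact ⟨hJ₁.1, hJ₂.2⟩
      · have hz := hI₂ m₁ hm₁ hlt
        exact ⟨hJ₁.1, by omega⟩
    · rw [min_eq_right h]
      rcases eq_or_lt_of_le h with rfl | hlt
      · exact ⟨hJ₁.1, hJ₂.2⟩
      · have hz := hI₁ m₂ hm₂ hlt
        exact ⟨by omega, hJ₂.2⟩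
  · intro m' h1 h2
    have e1 := hI₁ m' h1 (by omega)
    have e2 := hI₂ m' h1 (by omega)
    omega

lemma Fprop_comp (π : Equiv.Perm (Fin r)) (c : ℕ) {x y : Fin r × Fin r}
    (h₁ : Fprop π c x) (h₂ : Fprop π c y) (hxy : x.2 = y.1) :
    Fprop π c (x.1, y.2) := by
  obtain ⟨a, b⟩ := x
  obtain ⟨b', l⟩ := y
  simp only at hxy
  subst hxy
  simp only [Fprop, Jp, Jz, iter, Set.mem_setOf_eq] at h₁ h₂ ⊢
  obtain ⟨m₁, hm₁, hJ₁, hI₁⟩ := h₁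
  obtain ⟨m₂, hm₂, hJ₂, hI₂⟩ := h₂
  refine ⟨min m₁ m₂, le_min hm₁ hm₂, ?_, ?_⟩
  · rcases le_total m₁ m₂ with h | h
    · rw [min_eq_left h]
      rcases eq_or_lt_of_le h with rfl | hlt
      · exact ⟨hJ₂.1, hJ₁.2⟩
      · have hz := hI₂ m₁ hm₁ hlt
        exact ⟨by omega, hJ₁.2⟩
    · rw [min_eq_right h]
      rcases eq_or_lt_of_le h with rfl | hlt
      · exact ⟨hJ₂.1, hJ₁.2⟩
      · have hz := hI₁ m₂ hm₂ hlt
        exact ⟨hJ₂.1, by omega⟩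
  · intro m' h1 h2
    have e1 := hI₁ m' h1 (by omega)
    have e2 := hI₂ m' h1 (by omega)
    omega

lemma Bprop_irrefl (π : Equiv.Perm (Fin r)) (c : ℕ) (a : Fin r) :
    ¬ Bprop π c (a, a) := by
  rintro ⟨m, _, hJ, _⟩
  simp only [Jm, iter, Set.mem_setOf_eq] at hJ
  omega

end Aux


section Aux2

variable {r : ℕ}

/-! ### chains in `Jz0` -/

lemma Bprop_chain (π : Equiv.Perm (Fin r)) (c : ℕ) (n : ℕ) (f : ℕ → Fin r)
    (hf : ∀ i < n, (f i, f (i + 1)) ∈ Jz0 π c) :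
    ∀ j ≤ n, ∀ i < j, Bprop π c (f i, f j) := by
  intro j
  induction j with
  | zero => omega
  | succ j ih =>
    intro hj i hi
    have hlast : Bprop π c (f j, f (j + 1)) := (Jz0_sub π c (hf j (by omega))).2.1
    rcases Nat.lt_or_ge i j with h | h
    · exact Bprop_comp π c (ih (by omega) i h) hlast rfl
    · have : i = j := by omega
      subst this
      exact hlast

lemma no_chain (π : Equiv.Perm (Fin r)) (c : ℕ) (n : ℕ) (f : ℕ → Fin r)
    (hf : ∀ i < n, (f i, f (i + 1)) ∈ Jz0 π c)
    (S : Finset (Fin r)) (hS : S.card ≤ n) (hmem : ∀ i ≤ n, f i ∈ S) : False := by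
  have hcard : S.card < (Finset.range (n + 1)).card := by
    rw [Finset.card_range]; omega
  have hmaps : ∀ i ∈ Finset.range (n + 1), f i ∈ S := by
    intro i hi
    rw [Finset.mem_range] at hi
    exact hmem i (by omega)
  obtain ⟨i, hi, j, hj, hne, heq⟩ :=
    Finset.exists_ne_map_eq_of_card_lt_of_maps_to hcard hmaps
  rw [Finset.mem_range] at hi hj
  rcases Nat.lt_or_ge i j with h | h
  · have hB := Bprop_chain π c n f hf j (by omega) i h
    rw [heq] at hB
    exact Bprop_irrefl π c (f j) hB
  · have hij : j < i := by omega
    have hB := Bprop_chain π c n f hf i (by omega) j hij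
    rw [heq] at hB
    exact Bprop_irrefl π c (f j) hB

lemma side_chain (c n : ℕ) (f : ℕ → Fin r)
    (hf : ∀ i < n, (f i, f (i + 1)) ∈ Jz (r := r) c) :
    ∀ i ≤ n, ((f i).val < c ↔ (f 0).val < c) := by
  intro i
  induction i with
  | zero => simp
  | succ i ih =>
    intro h
    have h1 := hf i (by omega)
    have h2 := ih (by omega)
    simp only [Jz, Set.mem_setOf_eq] at h1
    omega

/-- cardinality of the top block. -/
lemma card_top (c : ℕ) :
    (Finset.univ.filter (fun x : Fin r => c ≤ x.val)).card ≤ r - c := by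
  classical
  have := Finset.card_le_card_of_injOn (s := Finset.univ.filter (fun x : Fin r => c ≤ x.val))
    (t := Finset.range (r - c)) (fun x : Fin r => x.val - c)
    (by
      intro x hx
      simp only [Finset.mem_coe, Finset.mem_filter, Finset.mem_univ, true_and] at hx
      simp only [Finset.mem_coe, Finset.mem_range]
      have := x.isLt
      omega)
    (by
      intro x hx y hy hxy
      simp only [Finset.coe_filter, Finset.mem_univ, true_and, Set.mem_setOf_eq] at hx hy
      apply Fin.ext
      simp only at hxy
      omega)
  simpa using this

lemma card_bot (c : ℕ) :
    (Finset.univ.filter (fun x : Fin r => x.val < c)).card ≤ c := by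
  classical
  have := Finset.card_le_card_of_injOn (s := Finset.univ.filter (fun x : Fin r => x.val < c))
    (t := Finset.range c) (fun x : Fin r => x.val)
    (by
      intro x hx
      simp only [Finset.mem_coe, Finset.mem_filter, Finset.mem_univ, true_and] at hx
      simpa using hx)
    (by
      intro x hx y hy hxy
      exact Fin.ext hxy)
  simpa using this

/-! ### span lemmas -/

variable {k : Type*} [Field k]

lemma spanUnits_mono {S T : Set (Fin r × Fin r)} (h : S ⊆ T) :
    spanUnits k S ≤ spanUnits k T :=
  Submodule.span_mono (Set.image_mono h)

lemma spanUnits_mul_le (S T U : Set (Fin r × Fin r))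
    (h : ∀ x ∈ S, ∀ y ∈ T, x.2 = y.1 → (x.1, y.2) ∈ U) :
    spanUnits k S * spanUnits k T ≤ spanUnits k U := by
  rw [spanUnits, spanUnits, Submodule.span_mul_span, Submodule.span_le]
  rintro z ⟨u, hu, v, hv, rfl⟩
  obtain ⟨x, hx, rfl⟩ := hu
  obtain ⟨y, hy, rfl⟩ := hv
  show Matrix.single x.1 x.2 (1 : k) * Matrix.single y.1 y.2 1 ∈
    (spanUnits k U : Set _)
  by_cases hbc : x.2 = y.1
  · have he : Matrix.single x.1 x.2 (1 : k) * Matrix.single y.1 y.2 1 =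
        Matrix.single x.1 y.2 1 := by
      rw [hbc, Matrix.single_mul_single_same, one_mul]
    rw [he]
    exact Submodule.subset_span ⟨(x.1, y.2), h x hx y hy hbc, rfl⟩
  · rw [Matrix.single_mul_single_of_ne (h := hbc)]
    exact Submodule.zero_mem _

lemma spanUnits_mul_eq_bot (S T : Set (Fin r × Fin r))
    (h : ∀ x ∈ S, ∀ y ∈ T, x.2 = y.1 → False) :
    spanUnits k S * spanUnits k T = ⊥ := by
  rw [eq_bot_iff]
  have := spanUnits_mul_le (k := k) S T ∅ (fun x hx y hy hxy => (h x hx y hy hxy).elim)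
  simpa [spanUnits] using this

/-- pairs joined by a chain of length `n` in `S`. -/
def chainSet (S : Set (Fin r × Fin r)) (n : ℕ) : Set (Fin r × Fin r) :=
  {q | ∃ f : ℕ → Fin r, f 0 = q.1 ∧ f n = q.2 ∧ ∀ i < n, (f i, f (i + 1)) ∈ S}

lemma spanUnits_pow_le (S : Set (Fin r × Fin r)) (n : ℕ) :
    spanUnits k S ^ (n + 1) ≤ spanUnits k (chainSet S (n + 1)) := by
  induction n with
  | zero =>
    rw [pow_one]
    apply spanUnits_mono
    intro q hq
    refine ⟨fun i => if i = 0 then q.1 else q.2, by simp, by simp, ?_⟩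
    intro i hi
    interval_cases i
    simpa
  | succ n ih =>
    rw [pow_succ]
    calc spanUnits k S ^ (n + 1) * spanUnits k S
        ≤ spanUnits k (chainSet S (n + 1)) * spanUnits k S :=
          mul_le_mul' ih le_rfl
      _ ≤ spanUnits k (chainSet S (n + 2)) := by
          apply spanUnits_mul_le
          rintro x ⟨f, hf0, hfn, hfc⟩ y hy hxy
          refine ⟨fun i => if i ≤ n + 1 then f i else y.2, by simp [hf0], by simp, ?_⟩
          intro i hi
          rcases Nat.lt_or_ge i (n + 1) with h | h
          · simpa [show i ≤ n + 1 by omega, show i + 1 ≤ n + 1 by omega] using hfc i h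
          · have : i = n + 1 := by omega
            subst this
            simp only [le_rfl, if_pos, if_neg (by omega : ¬ n + 1 + 1 ≤ n + 1)]
            rw [hfn, hxy]
            simpa using hy

end Aux2


section Aux3

variable {r : ℕ} {k : Type*} [Field k]

lemma spanUnits_pow_le' (S : Set (Fin r × Fin r)) {n : ℕ} (hn : 0 < n) :
    spanUnits k S ^ n ≤ spanUnits k (chainSet S n) := by
  obtain ⟨m, rfl⟩ : ∃ m, n = m + 1 := ⟨n - 1, by omega⟩
  exact spanUnits_pow_le S m

lemma chain_false_top (π : Equiv.Perm (Fin r)) (c d : ℕ) (hr : r = c + d)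
    {x : Fin r × Fin r} (hx : x ∈ chainSet (Jz0 π c) d)
    (hside : c ≤ x.1.val ∨ c ≤ x.2.val) : False := by
  obtain ⟨f, h0, hn, hcc⟩ := hx
  have hz : ∀ i < d, (f i, f (i + 1)) ∈ Jz (r := r) c :=
    fun i hi => (Jz0_sub π c (hcc i hi)).1
  have hiff := side_chain c d f hz
  have h0side : c ≤ (f 0).val := by
    rcases hside with h | h
    · rw [h0]; exact h
    · have hd := hiff d le_rfl
      rw [hn] at hd
      omega
  apply no_chain π c d f hcc (Finset.univ.filter (fun z : Fin r => c ≤ z.val)) ?_ ?_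
  · have := card_top (r := r) c
    omega
  · intro i hi
    simp only [Finset.mem_filter, Finset.mem_univ, true_and]
    have := hiff i hi
    omega

lemma chain_false_bot (π : Equiv.Perm (Fin r)) (c : ℕ)
    {x : Fin r × Fin r} (hx : x ∈ chainSet (Jz0 π c) c)
    (hside : x.1.val < c ∨ x.2.val < c) : False := by
  obtain ⟨f, h0, hn, hcc⟩ := hx
  have hz : ∀ i < c, (f i, f (i + 1)) ∈ Jz (r := r) c :=
    fun i hi => (Jz0_sub π c (hcc i hi)).1
  have hiff := side_chain c c f hz
  have h0side : (f 0).val < c := by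
    rcases hside with h | h
    · rw [h0]; exact h
    · have hd := hiff c le_rfl
      rw [hn] at hd
      omega
  apply no_chain π c c f hcc (Finset.univ.filter (fun z : Fin r => z.val < c)) ?_ ?_
  · exact card_bot (r := r) c
  · intro i hi
    simp only [Finset.mem_filter, Finset.mem_univ, true_and]
    have := hiff i hi
    omega

end Aux3


theorem statement_4 (c d : ℕ) (hc : 0 < c) (hd : 0 < d)
    (π : Equiv.Perm (Fin (c + d))) (k : Type*) [Field k] :
    (∀ n ∈ ({spanUnits k (Jp c : Set (Fin (c + d) × Fin (c + d))),
             spanUnits k (Jp1 π c),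
             spanUnits k (Jm c : Set (Fin (c + d) × Fin (c + d))),
             spanUnits k (Jm1 π c)} :
        Set (Submodule k (Matrix (Fin (c + d)) (Fin (c + d)) k))),
      spanUnits k (Jz0 π c) * n ≤ n ∧ n * spanUnits k (Jz0 π c) ≤ n) ∧
    spanUnits k (Jz0 π c) ^ d * spanUnits k (Jp c : Set (Fin (c + d) × Fin (c + d))) = ⊥ ∧
    spanUnits k (Jp c : Set (Fin (c + d) × Fin (c + d))) * spanUnits k (Jz0 π c) ^ c = ⊥ ∧
    spanUnits k (Jz0 π c) ^ c * spanUnits k (Jm c : Set (Fin (c + d) × Fin (c + d))) = ⊥ ∧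
    spanUnits k (Jm c : Set (Fin (c + d) × Fin (c + d))) * spanUnits k (Jz0 π c) ^ d = ⊥ := by
  refine ⟨?_, ?_, ?_, ?_, ?_⟩
  · intro n hn
    simp only [Set.mem_insert_iff, Set.mem_singleton_iff] at hn
    rcases hn with rfl | rfl | rfl | rfl
    · constructor
      · apply spanUnits_mul_le
        intro x hx y hy hxy
        have hz := (Jz0_sub π c hx).1
        have hveq : (x.2 : ℕ) = (y.1 : ℕ) := by rw [hxy]
        simp only [Jp, Jz, Set.mem_setOf_eq] at hz hy ⊢
        omega
      · apply spanUnits_mul_le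
        intro x hx y hy hxy
        have hz := (Jz0_sub π c hy).1
        have hveq : (x.2 : ℕ) = (y.1 : ℕ) := by rw [hxy]
        simp only [Jp, Jz, Set.mem_setOf_eq] at hz hx ⊢
        omega
    · constructor
      · apply spanUnits_mul_le
        intro x hx y hy hxy
        obtain ⟨hz, hB, _⟩ := Jz0_sub π c hx
        rw [Jp1_iff] at hy ⊢
        obtain ⟨hyp, hyB⟩ := hy
        refine ⟨?_, Bprop_comp π c hB hyB hxy⟩
        have hveq : (x.2 : ℕ) = (y.1 : ℕ) := by rw [hxy]
        simp only [Jp, Jz, Set.mem_setOf_eq] at hz hyp ⊢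
        omega
      · apply spanUnits_mul_le
        intro x hx y hy hxy
        obtain ⟨hz, hB, _⟩ := Jz0_sub π c hy
        rw [Jp1_iff] at hx ⊢
        obtain ⟨hxp, hxB⟩ := hx
        refine ⟨?_, Bprop_comp π c hxB hB hxy⟩
        have hveq : (x.2 : ℕ) = (y.1 : ℕ) := by rw [hxy]
        simp only [Jp, Jz, Set.mem_setOf_eq] at hz hxp ⊢
        omega
    · constructor
      · apply spanUnits_mul_le
        intro x hx y hy hxy
        have hz := (Jz0_sub π c hx).1
        have hveq : (x.2 : ℕ) = (y.1 : ℕ) := by rw [hxy]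
        simp only [Jm, Jz, Set.mem_setOf_eq] at hz hy ⊢
        omega
      · apply spanUnits_mul_le
        intro x hx y hy hxy
        have hz := (Jz0_sub π c hy).1
        have hveq : (x.2 : ℕ) = (y.1 : ℕ) := by rw [hxy]
        simp only [Jm, Jz, Set.mem_setOf_eq] at hz hx ⊢
        omega
    · constructor
      · apply spanUnits_mul_le
        intro x hx y hy hxy
        obtain ⟨hz, _, hF⟩ := Jz0_sub π c hx
        rw [Jm1_iff] at hy ⊢
        obtain ⟨hyp, hyF⟩ := hy
        refine ⟨?_, Fprop_comp π c hF hyF hxy⟩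
        have hveq : (x.2 : ℕ) = (y.1 : ℕ) := by rw [hxy]
        simp only [Jm, Jz, Set.mem_setOf_eq] at hz hyp ⊢
        omega
      · apply spanUnits_mul_le
        intro x hx y hy hxy
        obtain ⟨hz, _, hF⟩ := Jz0_sub π c hy
        rw [Jm1_iff] at hx ⊢
        obtain ⟨hxp, hxF⟩ := hx
        refine ⟨?_, Fprop_comp π c hxF hF hxy⟩
        have hveq : (x.2 : ℕ) = (y.1 : ℕ) := by rw [hxy]
        simp only [Jm, Jz, Set.mem_setOf_eq] at hz hxp ⊢
        omega
  · rw [eq_bot_iff]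
    refine le_trans (mul_le_mul' (spanUnits_pow_le' _ hd) le_rfl)
      (le_of_eq (spanUnits_mul_eq_bot _ _ ?_))
    intro x hx y hy hxy
    apply chain_false_top π c d rfl hx
    right
    rw [hxy]
    exact hy.2
  · rw [eq_bot_iff]
    refine le_trans (mul_le_mul' le_rfl (spanUnits_pow_le' _ hc))
      (le_of_eq (spanUnits_mul_eq_bot _ _ ?_))
    intro x hx y hy hxy
    apply chain_false_bot π c hy
    left
    rw [← hxy]
    exact hx.1
  · rw [eq_bot_iff]
    refine le_trans (mul_le_mul' (spanUnits_pow_le' _ hc) le_rfl)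
      (le_of_eq (spanUnits_mul_eq_bot _ _ ?_))
    intro x hx y hy hxy
    apply chain_false_bot π c hx
    right
    rw [hxy]
    exact hy.1
  · rw [eq_bot_iff]
    refine le_trans (mul_le_mul' le_rfl (spanUnits_pow_le' _ hd))
      (le_of_eq (spanUnits_mul_eq_bot _ _ ?_))
    intro x hx y hy hxy
    apply chain_false_top π c d rfl hy
    left
    rw [← hxy]
    exact hx.2


end PaperPurity
end

section
/- With the combinatorial setup below, if p is a prime with p ≥ 3, then κ(γ) < 1 for every γ ∈ Γ. -/
namespace PaperPurity

variable {r : ℕ}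

/-! ### Auxiliary lemmas -/

private lemma iter_iter {r : ℕ} (π : Equiv.Perm (Fin r)) (a b : ℕ) (q : Fin r × Fin r) :
    iter π a (iter π b q) = iter π (a + b) q := by
  simp [iter, pow_add, Equiv.Perm.mul_apply]

private lemma exit_nonempty {r : ℕ} (π : Equiv.Perm (Fin r)) (c : ℕ) {q : Fin r × Fin r}
    (hq : q ∈ Jm c) : {ν : ℕ | 0 < ν ∧ iter π ν q ∈ Jp c ∪ Jm c}.Nonempty := by
  refine ⟨orderOf π, orderOf_pos π, ?_⟩
  have h1 : iter π (orderOf π) q = q := by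
    simp [iter, pow_orderOf_eq_one]
  rw [h1]
  exact Or.inr hq

private lemma Jm1_spec {r : ℕ} (π : Equiv.Perm (Fin r)) (c : ℕ) {q : Fin r × Fin r}
    (hq : q ∈ Jm1 π c) :
    0 < nu π c q ∧ iter π (nu π c q) q ∈ Jp c ∧
      ∀ w, 0 < w → w < nu π c q → iter π w q ∉ Jp c ∪ Jm c := by
  obtain ⟨hqm, hqp⟩ := hq
  have hne := exit_nonempty π c hqm
  have hmem : 0 < nu π c q ∧ iter π (nu π c q) q ∈ Jp c ∪ Jm c := Nat.sInf_mem hne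
  refine ⟨hmem.1, hqp, fun w hw hlt hmem' => ?_⟩
  exact Nat.notMem_of_lt_sInf hlt ⟨hw, hmem'⟩

private lemma Jz0_spec {r : ℕ} (π : Equiv.Perm (Fin r)) (c : ℕ) {q' : Fin r × Fin r}
    (hq' : q' ∈ Jz0 π c) :
    1 ≤ nu π c q' ∧ iter π (nu π c q') q' ∈ Jp c ∧
      (∀ w, 0 < w → w < nu π c q' → iter π w q' ∉ Jp c ∪ Jm c) ∧ q' ∉ Jp c ∪ Jm c := by
  obtain ⟨q, hq, u, hu1, hu2, rfl⟩ := hq'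
  obtain ⟨hν0, hνp, hmin⟩ := Jm1_spec π c hq
  have huν : u < nu π c q := by omega
  have hnotin : iter π u q ∉ Jp c ∪ Jm c := hmin u (by omega) huν
  have hsub : iter π (nu π c q - u) (iter π u q) = iter π (nu π c q) q := by
    rw [iter_iter, Nat.sub_add_cancel huν.le]
  have hν' : nu π c (iter π u q) = nu π c q - u := by
    apply le_antisymm
    · apply Nat.sInf_le
      refine ⟨by omega, ?_⟩
      rw [hsub]
      exact Or.inl hνp
    · by_contra h
      push_neg at h
      have hne2 : {ν : ℕ | 0 < ν ∧ iter π ν (iter π u q) ∈ Jp c ∪ Jm c}.Nonempty := by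
        refine ⟨nu π c q - u, by omega, ?_⟩
        rw [hsub]
        exact Or.inl hνp
      have hmem : 0 < nu π c (iter π u q) ∧
          iter π (nu π c (iter π u q)) (iter π u q) ∈ Jp c ∪ Jm c := Nat.sInf_mem hne2
      obtain ⟨hpos, hin⟩ := hmem
      rw [iter_iter] at hin
      exact hmin _ (by omega) (by omega) hin
  refine ⟨by omega, ?_, ?_, hnotin⟩
  · rw [hν', hsub]
    exact hνp
  · intro w hw hlt
    rw [hν'] at hlt
    rw [iter_iter]
    exact hmin _ (by omega) (by omega)

private lemma mem_tri {r : ℕ} (c : ℕ) (q : Fin r × Fin r) :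
    q ∈ Jp c ∪ Jm c ∨ q ∈ Jz c := by
  simp only [Jp, Jm, Jz, Set.mem_union, Set.mem_setOf_eq]
  omega

private lemma prop_step {r : ℕ} (π : Equiv.Perm (Fin r)) (c : ℕ) (x y : Fin r)
    (h : (x, y) ∈ Jz0 π c) (t : ℕ) (ht : 0 < t) (htle : t ≤ nu π c (x, y))
    (hx : ((π ^ t) x).val < c) :
    t < nu π c (x, y) ∧ ((π ^ t) y).val < c := by
  obtain ⟨h1, h2, h3, _⟩ := Jz0_spec π c h
  rcases eq_or_lt_of_le htle with heq | hlt
  · exfalso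
    rw [← heq] at h2
    simp only [Jp, iter, Set.mem_setOf_eq] at h2
    omega
  · refine ⟨hlt, ?_⟩
    have hni := h3 t ht hlt
    rcases mem_tri c (iter π t (x, y)) with hin | hz
    · exact absurd hin hni
    · simp only [Jz, iter, Set.mem_setOf_eq] at hz
      omega

private lemma sum_bound (p : ℚ) (hp : 3 ≤ p) :
    ∀ (n a b : ℕ) (f : ℕ → ℕ) (t : ℕ), b - a ≤ n →
    (∀ i, a ≤ i → i < b → t ≤ f i) →
    (∀ i j, a ≤ i → i < j → j < b → f i = f j → ∃ u, i < u ∧ u < j ∧ f u < f i) →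
    ∑ i ∈ Finset.Ico a b, 1 / p ^ f i < p / (p ^ t * (p - 2)) := by
  have hp0 : (0 : ℚ) < p := by linarith
  have hp2 : (0 : ℚ) < p - 2 := by linarith
  intro n
  induction n with
  | zero =>
    intro a b f t hlen _ _
    rw [Finset.Ico_eq_empty (by omega)]
    simpa using div_pos hp0 (mul_pos (pow_pos hp0 t) hp2)
  | succ n ih =>
    intro a b f t hlen hge hsep
    rcases le_or_gt b a with hba | hab
    · rw [Finset.Ico_eq_empty (by omega)]
      simpa using div_pos hp0 (mul_pos (pow_pos hp0 t) hp2)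
    · obtain ⟨i₀, hi₀, hmin⟩ := Finset.exists_min_image (Finset.Ico a b) f ⟨a, by simp [hab]⟩
      rw [Finset.mem_Ico] at hi₀
      have hstrict : ∀ i, a ≤ i → i < b → i ≠ i₀ → f i₀ < f i := by
        intro i hi1 hi2 hne
        refine lt_of_le_of_ne (hmin i (Finset.mem_Ico.2 ⟨hi1, hi2⟩)) fun heq => ?_
        rcases hne.lt_or_gt with hlt | hlt
        · obtain ⟨u, hu1, hu2, hu3⟩ := hsep i i₀ hi1 hlt hi₀.2 heq.symm
          have := hmin u (Finset.mem_Ico.2 ⟨by omega, by omega⟩)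
          omega
        · obtain ⟨u, hu1, hu2, hu3⟩ := hsep i₀ i hi₀.1 hlt hi2 heq
          have := hmin u (Finset.mem_Ico.2 ⟨by omega, by omega⟩)
          omega
      have hμt : t ≤ f i₀ := hge i₀ hi₀.1 hi₀.2
      have key1 : ∑ i ∈ Finset.Ico a i₀, 1 / p ^ f i < p / (p ^ (f i₀ + 1) * (p - 2)) :=
        ih a i₀ f (f i₀ + 1) (by omega)
          (fun i h1 h2 => hstrict i h1 (by omega) (by omega))
          (fun i j h1 h2 h3 he => hsep i j h1 h2 (by omega) he)
      have key2 : ∑ i ∈ Finset.Ico (i₀ + 1) b, 1 / p ^ f i < p / (p ^ (f i₀ + 1) * (p - 2)) :=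
        ih (i₀ + 1) b f (f i₀ + 1) (by omega)
          (fun i h1 h2 => hstrict i (by omega) h2 (by omega))
          (fun i j h1 h2 h3 he => hsep i j (by omega) h2 h3 he)
      have hsplit : ∑ i ∈ Finset.Ico a b, 1 / p ^ f i =
          ∑ i ∈ Finset.Ico a i₀, 1 / p ^ f i +
            (1 / p ^ f i₀ + ∑ i ∈ Finset.Ico (i₀ + 1) b, 1 / p ^ f i) := by
        rw [← Finset.sum_Ico_consecutive _ hi₀.1 (le_of_lt hi₀.2),
          Finset.sum_eq_sum_Ico_succ_bot hi₀.2]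
      have hpμ : (p : ℚ) ^ f i₀ ≠ 0 := (pow_pos hp0 (f i₀)).ne'
      calc ∑ i ∈ Finset.Ico a b, 1 / p ^ f i
          = ∑ i ∈ Finset.Ico a i₀, 1 / p ^ f i +
            (1 / p ^ f i₀ + ∑ i ∈ Finset.Ico (i₀ + 1) b, 1 / p ^ f i) := hsplit
        _ < p / (p ^ (f i₀ + 1) * (p - 2)) +
            (1 / p ^ f i₀ + p / (p ^ (f i₀ + 1) * (p - 2))) :=
            add_lt_add key1 ((add_lt_add_iff_left _).2 key2)
        _ = p / (p ^ f i₀ * (p - 2)) := by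
            rw [pow_succ]
            field_simp
            ring
        _ ≤ p / (p ^ t * (p - 2)) := by
            apply div_le_div_of_nonneg_left (le_of_lt hp0) (mul_pos (pow_pos hp0 t) hp2)
            exact mul_le_mul_of_nonneg_right
              (pow_le_pow_right₀ (by linarith : (1 : ℚ) ≤ p) hμt) hp2.le


theorem statement_7 (p : ℕ) (hp : p.Prime) (hp3 : 3 ≤ p)
    (c d : ℕ) (hc : 0 < c) (hd : 0 < d)
    (π : Equiv.Perm (Fin (c + d))) (s : ℕ) (γ : ℕ → Fin (c + d))
    (hγ : inGamma π c s γ) :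
    kappa p π c s γ < 1 := by
  classical
  obtain ⟨hs2, hz, hlast⟩ := hγ
  have hmemz : ∀ ℓ ∈ Finset.Ico 1 (s - 1), (γ ℓ, γ (ℓ + 1)) ∈ Jz0 π c := by
    intro ℓ hℓ
    rw [Finset.mem_Ico] at hℓ
    exact hz ℓ hℓ.1 (by omega)
  have hν1 : ∀ ℓ ∈ Finset.Ico 1 (s - 1), 1 ≤ nu π c (γ ℓ, γ (ℓ + 1)) :=
    fun ℓ hℓ => (Jz0_spec π c (hmemz ℓ hℓ)).1
  have hcount : ∀ t : ℕ, nCount π c s γ t =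
      ((Finset.Ico 1 (s - 1)).filter (fun ℓ => nu π c (γ ℓ, γ (ℓ + 1)) = t)).card := by
    intro t
    unfold nCount
    rw [← Set.ncard_coe_finset]
    congr 1
    ext ℓ
    simp only [Set.mem_setOf_eq, Finset.coe_filter, Finset.mem_Ico]
    constructor
    · rintro ⟨h1, h2, h3, h4⟩
      refine ⟨⟨h1, ?_⟩, h4⟩
      rcases eq_or_lt_of_le h2 with heq | hlt
      · exfalso
        subst heq
        have hs1 : s - 1 + 1 = s := by omega
        rw [hs1] at h3
        exact (Jz0_spec π c h3).2.2.2 (Or.inl hlast.1)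
      · omega
    · rintro ⟨⟨h1, h2⟩, h4⟩
      exact ⟨h1, by omega, hmemz ℓ (Finset.mem_Ico.2 ⟨h1, h2⟩), h4⟩
  set T : Finset ℕ :=
    (Finset.Ico 1 (s - 1)).image (fun ℓ => nu π c (γ ℓ, γ (ℓ + 1))) with hT
  have hsupp : Function.support
      (fun t : ℕ => if 1 ≤ t then (nCount π c s γ t : ℚ) / (p : ℚ) ^ t else 0) ⊆ ↑T := by
    intro t ht
    simp only [Function.mem_support] at ht
    by_cases h1 : 1 ≤ t
    · rw [if_pos h1] at ht
      have hc0 : nCount π c s γ t ≠ 0 := by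
        intro h0
        rw [h0] at ht
        simp at ht
      rw [hcount t] at hc0
      obtain ⟨ℓ, hℓ⟩ := Finset.card_ne_zero.mp hc0
      rw [Finset.mem_filter] at hℓ
      exact Finset.mem_coe.2 (hℓ.2 ▸ Finset.mem_image_of_mem _ hℓ.1)
    · rw [if_neg h1] at ht
      exact absurd rfl ht
  have hk : kappa p π c s γ =
      ∑ ℓ ∈ Finset.Ico 1 (s - 1), 1 / (p : ℚ) ^ nu π c (γ ℓ, γ (ℓ + 1)) := by
    unfold kappa
    have hfib := Finset.sum_fiberwise_of_maps_to (s := Finset.Ico 1 (s - 1)) (t := T)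
      (g := fun ℓ => nu π c (γ ℓ, γ (ℓ + 1)))
      (fun ℓ hℓ => Finset.mem_image_of_mem _ hℓ)
      (fun ℓ => 1 / (p : ℚ) ^ nu π c (γ ℓ, γ (ℓ + 1)))
    rw [finsum_eq_finset_sum_of_support_subset _ hsupp, ← hfib]
    apply Finset.sum_congr rfl
    intro t htT
    obtain ⟨ℓ₀, hℓ₀, hℓ₀t⟩ := Finset.mem_image.1 htT
    have h1t : 1 ≤ t := hℓ₀t ▸ hν1 ℓ₀ hℓ₀
    rw [if_pos h1t, hcount t,
      Finset.sum_congr rfl (fun ℓ hℓ => by rw [(Finset.mem_filter.1 hℓ).2]),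
      Finset.sum_const, nsmul_eq_mul, mul_one_div]
  have hsep : ∀ i j, 1 ≤ i → i < j → j < s - 1 →
      nu π c (γ i, γ (i + 1)) = nu π c (γ j, γ (j + 1)) →
      ∃ u, i < u ∧ u < j ∧ nu π c (γ u, γ (u + 1)) < nu π c (γ i, γ (i + 1)) := by
    intro i j hi hij hjs heq
    by_contra hcon
    push_neg at hcon
    set t := nu π c (γ i, γ (i + 1)) with htdef
    have hiR : i ∈ Finset.Ico 1 (s - 1) := Finset.mem_Ico.2 ⟨hi, by omega⟩
    have hjR : j ∈ Finset.Ico 1 (s - 1) := Finset.mem_Ico.2 ⟨by omega, hjs⟩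
    have ht1 : 1 ≤ t := hν1 i hiR
    have hiJp := (Jz0_spec π c (hmemz i hiR)).2.1
    rw [← htdef] at hiJp
    simp only [Jp, iter, Set.mem_setOf_eq] at hiJp
    have hstart : ((π ^ t) (γ (i + 1))).val < c := hiJp.1
    have hchain : ∀ m, i + 1 + m ≤ j → ((π ^ t) (γ (i + 1 + m))).val < c := by
      intro m
      induction m with
      | zero => intro _; simpa using hstart
      | succ m ihm =>
        intro hle
        have hkm := ihm (by omega)
        have hkR : i + 1 + m ∈ Finset.Ico 1 (s - 1) := Finset.mem_Ico.2 ⟨by omega, by omega⟩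
        have hkt : t ≤ nu π c (γ (i + 1 + m), γ (i + 1 + m + 1)) :=
          hcon _ (by omega) (by omega)
        have hres := (prop_step π c (γ (i + 1 + m)) (γ (i + 1 + m + 1))
          (hmemz _ hkR) t (by omega) hkt hkm).2
        have harith : i + 1 + (m + 1) = i + 1 + m + 1 := by ring
        rw [harith]
        exact hres
    have hj1 : ((π ^ t) (γ j)).val < c := by
      have h := hchain (j - (i + 1)) (by omega)
      rwa [show i + 1 + (j - (i + 1)) = j from by omega] at h
    have hjJp := (Jz0_spec π c (hmemz j hjR)).2.1
    rw [← heq] at hjJp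
    simp only [Jp, iter, Set.mem_setOf_eq] at hjJp
    omega
  have hp3' : (3 : ℚ) ≤ (p : ℚ) := by exact_mod_cast hp3
  have hb : ∑ ℓ ∈ Finset.Ico 1 (s - 1), 1 / (p : ℚ) ^ nu π c (γ ℓ, γ (ℓ + 1)) <
      (p : ℚ) / ((p : ℚ) ^ 1 * ((p : ℚ) - 2)) :=
    sum_bound (p : ℚ) hp3' s 1 (s - 1) (fun ℓ => nu π c (γ ℓ, γ (ℓ + 1))) 1 (by omega)
      (fun i h1 h2 => hν1 i (Finset.mem_Ico.2 ⟨h1, h2⟩)) hsep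
  have hle1 : (p : ℚ) / ((p : ℚ) ^ 1 * ((p : ℚ) - 2)) ≤ 1 := by
    rw [pow_one, div_le_one (by nlinarith)]
    nlinarith
  rw [hk]
  linarith

end PaperPurity
end
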